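/- arXiv:1606.02898 — 2 statements merged into one kernel-verified Lean document; each statement's English description precedes it below -/
import Mathlib

section
/- Let p > 5, γ < 0 and ω > 0. Then n_ω = l_ω, i.e. the infimum of S_{ω,γ} over nonzero H¹(ℝ) functions with P_γ = 0 equals the infimum of S_{ω,0} over nonzero H¹(ℝ) functions with P_0 = 0. -/
open MeasureTheory Real Filter Topology

/-- `φ : ℝ → ℂ` lies in `H¹(ℝ)`: `φ ∈ L²(ℝ)` together with a weak derivative
`dx ∈ L²(ℝ)` such that `φ x = φ 0 + ∫₀ˣ dx (t) dt` for all `x`. -/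
structure H1 where
  toFun : ℝ → ℂ
  dx : ℝ → ℂ
  memL2 : MemLp toFun 2 (volume : Measure ℝ)
  dx_memL2 : MemLp dx 2 (volume : Measure ℝ)
  eq_int : ∀ x : ℝ, toFun x = toFun 0 + ∫ t in (0:ℝ)..x, dx t

/-- `‖∂ₓφ‖²_{L²}` -/
noncomputable def gradSq (φ : H1) : ℝ := ∫ x : ℝ, ‖φ.dx x‖ ^ 2

/-- `‖φ‖²_{L²}` -/
noncomputable def massSq (φ : H1) : ℝ := ∫ x : ℝ, ‖φ.toFun x‖ ^ 2

/-- `‖φ‖^{p+1}_{L^{p+1}}` -/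
noncomputable def lpPow (p : ℝ) (φ : H1) : ℝ := ∫ x : ℝ, ‖φ.toFun x‖ ^ (p + 1)

/-- The action `S_{ω,μ}(φ) = (1/4)‖∂ₓφ‖²_{L²} − (μ/2)|φ(0)|² + (ω/2)‖φ‖²_{L²}
− (1/(p+1))‖φ‖^{p+1}_{L^{p+1}}`. -/
noncomputable def Sfun (p ω μ : ℝ) (φ : H1) : ℝ :=
  (1/4) * gradSq φ - (μ/2) * ‖φ.toFun 0‖ ^ 2 + (ω/2) * massSq φ - (1/(p+1)) * lpPow p φ

/-- The virial functional `P_μ(φ) = (1/2)‖∂ₓφ‖²_{L²} − (μ/2)|φ(0)|²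
− ((p−1)/(2(p+1)))‖φ‖^{p+1}_{L^{p+1}}`. -/
noncomputable def Pfun (p μ : ℝ) (φ : H1) : ℝ :=
  (1/2) * gradSq φ - (μ/2) * ‖φ.toFun 0‖ ^ 2 - ((p-1)/(2*(p+1))) * lpPow p φ

/-- The Nehari functional `I_{ω,γ}(φ) = (1/2)‖∂ₓφ‖²_{L²} − γ|φ(0)|² + ω‖φ‖²_{L²}
− ‖φ‖^{p+1}_{L^{p+1}}`. -/
noncomputable def Ifun (p ω γ : ℝ) (φ : H1) : ℝ :=
  (1/2) * gradSq φ - γ * ‖φ.toFun 0‖ ^ 2 + ω * massSq φ - lpPow p φ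

/-- `K^{α,β}_{ω,γ}`. -/
noncomputable def Kfun (p ω γ α β : ℝ) (φ : H1) : ℝ :=
  ((2*α-β)/4) * gradSq φ + (ω*(2*α+β)/2) * massSq φ - γ*α*‖φ.toFun 0‖ ^ 2
    - (((p+1)*α+β)/(p+1)) * lpPow p φ

/-- `J^{α,β}_{ω,γ}(φ) = S_{ω,γ}(φ) − K^{α,β}_{ω,γ}(φ)/μ̄` with `μ̄ = max(2α−β, 2α+β)`. -/
noncomputable def Jfun (p ω γ α β : ℝ) (φ : H1) : ℝ :=
  Sfun p ω γ φ - Kfun p ω γ α β φ / max (2*α-β) (2*α+β)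

/-- The mass `M(φ) = (1/2)‖φ‖²_{L²}`. -/
noncomputable def Mfun (φ : H1) : ℝ := (1/2) * massSq φ

/-- The energy `E_μ(φ) = (1/4)‖∂ₓφ‖²_{L²} − (μ/2)|φ(0)|² − (1/(p+1))‖φ‖^{p+1}_{L^{p+1}}`. -/
noncomputable def Efun (p μ : ℝ) (φ : H1) : ℝ :=
  (1/4) * gradSq φ - (μ/2) * ‖φ.toFun 0‖ ^ 2 - (1/(p+1)) * lpPow p φ

/-- `n_ω`: infimum of `S_{ω,γ}` over nonzero `H¹(ℝ)` functions with `P_γ = 0`. -/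
noncomputable def nOmega (p γ ω : ℝ) : ℝ :=
  sInf {s : ℝ | ∃ φ : H1, φ.toFun ≠ 0 ∧ Pfun p γ φ = 0 ∧ Sfun p ω γ φ = s}

/-- `r_ω`: infimum of `S_{ω,γ}` over nonzero even `H¹(ℝ)` functions with `P_γ = 0`. -/
noncomputable def rOmega (p γ ω : ℝ) : ℝ :=
  sInf {s : ℝ | ∃ φ : H1, φ.toFun ≠ 0 ∧ (∀ x, φ.toFun (-x) = φ.toFun x) ∧
    Pfun p γ φ = 0 ∧ Sfun p ω γ φ = s}

/-- `l_ω`: infimum of `S_{ω,0}` over nonzero `H¹(ℝ)` functions with `P_0 = 0`. -/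
noncomputable def lOmega (p ω : ℝ) : ℝ :=
  sInf {s : ℝ | ∃ φ : H1, φ.toFun ≠ 0 ∧ Pfun p 0 φ = 0 ∧ Sfun p ω 0 φ = s}

/-- The inverse hyperbolic tangent. -/
noncomputable def artanh (x : ℝ) : ℝ := (1/2) * Real.log ((1+x)/(1-x))

/-- The standing-wave profile
`Q_{ω,γ}(x) = ( ((p+1)ω/2)·sech²( ((p−1)√ω/√2)|x| + artanh(γ/√(2ω)) ) )^{1/(p−1)}`. -/
noncomputable def Qsol (p γ ω : ℝ) : ℝ → ℝ := fun x =>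
  (((p+1)*ω/2) *
    (1 / Real.cosh (((p-1)*Real.sqrt ω/Real.sqrt 2) * |x| + _root_.artanh (γ / Real.sqrt (2*ω)))) ^ 2)
  ^ (1/(p-1))

/-- The free ground state `Q_{1,0}(x) = ( ((p+1)/2)·sech²( ((p−1)/√2)x ) )^{1/(p−1)}`. -/
noncomputable def Qfree (p : ℝ) : ℝ → ℝ := fun x =>
  (((p+1)/2) * (1 / Real.cosh (((p-1)/Real.sqrt 2) * x)) ^ 2) ^ (1/(p-1))

/-- `‖φ‖²_𝓗 = (1/4)‖∂ₓφ‖²_{L²} + (ω/2)‖φ‖²_{L²} − (γ/2)|φ(0)|²`. -/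
noncomputable def HnormSq (ω γ : ℝ) (φ : H1) : ℝ :=
  (1/4) * gradSq φ + (ω/2) * massSq φ - (γ/2) * ‖φ.toFun 0‖ ^ 2

/-!
On the constraint `P_μ = 0` the `L^{p+1}` term can be eliminated from `S_{ω,μ}`, which leaves
`(p-5)/(4(p-1)) ‖∂ₓφ‖² + (ω/2) ‖φ‖² - μ (p-3)/(2(p-1)) |φ(0)|²`, and a scaling `φ ↦ λφ` moves
a function from `P_μ = 0` to `P_ν = 0`. Going from `P_γ = 0` to `P_0 = 0` needs `λ ≤ 1` and
drops the nonnegative term `-γ (p-3)/(2(p-1)) |φ(0)|²`, so `l_ω ≤ n_ω`. Conversely, a function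
in `L²` takes arbitrarily small values, so a translate of a function on `P_0 = 0` has `|φ(0)|`
as small as we like; scaling it onto `P_γ = 0` then changes the action arbitrarily little, so
`n_ω ≤ l_ω`.
-/

lemma csInf_le_csInf_of_forall_exists_le_add {S T : Set ℝ} (hT : BddBelow T) (hS : S.Nonempty)
    (h : ∀ s ∈ S, ∀ ε > 0, ∃ t ∈ T, t ≤ s + ε) : sInf T ≤ sInf S :=
  le_csInf hS fun s hs => le_of_forall_pos_le_add fun ε hε => by
    obtain ⟨t, ht, hts⟩ := h s hs ε hε
    exact (csInf_le hT ht).trans hts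

lemma csInf_eq_csInf_of_forall_exists_le_add {S T : Set ℝ} (hS : BddBelow S) (hT : BddBelow T)
    (hST : ∀ s ∈ S, ∀ ε > 0, ∃ t ∈ T, t ≤ s + ε)
    (hTS : ∀ t ∈ T, ∀ ε > 0, ∃ s ∈ S, s ≤ t + ε) :
    sInf S = sInf T := by
  rcases S.eq_empty_or_nonempty with rfl | hS_ne
  · rcases T.eq_empty_or_nonempty with rfl | ⟨t, ht⟩
    · rfl
    · obtain ⟨s, hs, -⟩ := hTS t ht 1 one_pos
      exact absurd hs (Set.notMem_empty s)
  · obtain ⟨s, hs⟩ := hS_ne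
    obtain ⟨t, ht, -⟩ := hST s hs 1 one_pos
    exact le_antisymm (csInf_le_csInf_of_forall_exists_le_add hS ⟨t, ht⟩ hTS)
      (csInf_le_csInf_of_forall_exists_le_add hT ⟨s, hs⟩ hST)

lemma rpow_one_div_sub_one_rpow_add_one {r p : ℝ} (hr : 0 ≤ r) (hp : 1 < p) :
    (r ^ (1 / (p - 1))) ^ (p + 1) = (r ^ (1 / (p - 1))) ^ 2 * r := by
  rw [show p + 1 = 2 + (p - 1) by ring, Real.rpow_add' (by positivity) (by linarith),
    Real.rpow_two, ← Real.rpow_mul hr, one_div_mul_cancel (by linarith), Real.rpow_one]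

namespace H1

lemma intervalIntegrable_dx (φ : H1) (a b : ℝ) : IntervalIntegrable φ.dx volume a b :=
  ((φ.dx_memL2.locallyIntegrable (by norm_num)).integrableOn_isCompact
    isCompact_uIcc).intervalIntegrable

lemma integrable_norm_sq (φ : H1) : Integrable (fun x => ‖φ.toFun x‖ ^ 2) :=
  (memLp_two_iff_integrable_sq_norm φ.memL2.1).1 φ.memL2

lemma integrable_norm_dx_sq (φ : H1) : Integrable (fun x => ‖φ.dx x‖ ^ 2) :=
  (memLp_two_iff_integrable_sq_norm φ.dx_memL2.1).1 φ.dx_memL2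

noncomputable instance : SMul ℝ H1 where
  smul l φ :=
    { toFun := fun x => l * φ.toFun x
      dx := fun x => l * φ.dx x
      memL2 := φ.memL2.const_mul _
      dx_memL2 := φ.dx_memL2.const_mul _
      eq_int := fun x => by rw [intervalIntegral.integral_const_mul, ← mul_add, ← φ.eq_int] }

lemma smul_toFun (l : ℝ) (φ : H1) (x : ℝ) : (l • φ).toFun x = l * φ.toFun x := rfl

lemma smul_dx (l : ℝ) (φ : H1) (x : ℝ) : (l • φ).dx x = l * φ.dx x := rfl

lemma smul_toFun_ne_zero {l : ℝ} (hl : l ≠ 0) {φ : H1} (hφ : φ.toFun ≠ 0) :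
    (l • φ).toFun ≠ 0 := by
  obtain ⟨x, hx⟩ := Function.ne_iff.1 hφ
  exact Function.ne_iff.2 ⟨x, mul_ne_zero (Complex.ofReal_ne_zero.2 hl) hx⟩

noncomputable def shift (a : ℝ) (φ : H1) : H1 where
  toFun x := φ.toFun (x + a)
  dx x := φ.dx (x + a)
  memL2 := φ.memL2.comp_measurePreserving (measurePreserving_add_right volume a)
  dx_memL2 := φ.dx_memL2.comp_measurePreserving (measurePreserving_add_right volume a)
  eq_int x := by
    rw [intervalIntegral.integral_comp_add_right, zero_add,
      ← intervalIntegral.integral_interval_sub_left (φ.intervalIntegrable_dx 0 _)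
        (φ.intervalIntegrable_dx 0 _), φ.eq_int (x + a), φ.eq_int a]
    ring

lemma shift_toFun (a : ℝ) (φ : H1) (x : ℝ) : (φ.shift a).toFun x = φ.toFun (x + a) := rfl

lemma shift_toFun_ne_zero (a : ℝ) {φ : H1} (hφ : φ.toFun ≠ 0) : (φ.shift a).toFun ≠ 0 := by
  obtain ⟨x, hx⟩ := Function.ne_iff.1 hφ
  exact Function.ne_iff.2 ⟨x - a, by rwa [shift_toFun, sub_add_cancel]⟩

lemma toFun_eq_zero_of_gradSq_eq_zero {φ : H1} (h : gradSq φ = 0) : φ.toFun = 0 := by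
  have hdx : φ.dx =ᵐ[volume] 0 := by
    filter_upwards [(integral_eq_zero_iff_of_nonneg (fun x => by positivity)
      φ.integrable_norm_dx_sq).1 h] with x hx
    simpa using hx
  have hconst : φ.toFun = fun _ => φ.toFun 0 := by
    funext x
    rw [φ.eq_int x, intervalIntegral.integral_congr_ae (hdx.mono fun t ht _ => ht)]
    simp
  have hmem := φ.memL2
  rw [hconst, memLp_const_iff two_ne_zero ENNReal.ofNat_ne_top, Real.volume_univ] at hmem
  rw [hconst, hmem.resolve_right (lt_irrefl _)]
  rfl

lemma exists_norm_sq_lt (φ : H1) {δ : ℝ} (hδ : 0 < δ) : ∃ a, ‖φ.toFun a‖ ^ 2 < δ := by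
  by_contra! h
  have hint : Integrable (fun _ : ℝ => δ) :=
    φ.integrable_norm_sq.mono' aestronglyMeasurable_const
      (ae_of_all _ fun x => by rw [Real.norm_eq_abs, abs_of_pos hδ]; exact h x)
  rw [integrable_const_iff] at hint
  refine hint.elim hδ.ne' fun h => ?_
  simpa using h.measure_univ_lt_top

end H1

open H1

lemma gradSq_pos {φ : H1} (hφ : φ.toFun ≠ 0) : 0 < gradSq φ :=
  (integral_nonneg fun _ => by positivity).lt_of_ne'
    fun h => hφ (toFun_eq_zero_of_gradSq_eq_zero h)

lemma gradSq_smul (l : ℝ) (φ : H1) : gradSq (l • φ) = l ^ 2 * gradSq φ := by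
  simp only [gradSq, smul_dx, norm_mul, Complex.norm_real, Real.norm_eq_abs, mul_pow, sq_abs]
  exact integral_const_mul _ _

lemma massSq_smul (l : ℝ) (φ : H1) : massSq (l • φ) = l ^ 2 * massSq φ := by
  simp only [massSq, smul_toFun, norm_mul, Complex.norm_real, Real.norm_eq_abs, mul_pow, sq_abs]
  exact integral_const_mul _ _

lemma lpPow_smul (p l : ℝ) (φ : H1) : lpPow p (l • φ) = |l| ^ (p + 1) * lpPow p φ := by
  have h (x : ℝ) : ‖(l • φ).toFun x‖ ^ (p + 1) = |l| ^ (p + 1) * ‖φ.toFun x‖ ^ (p + 1) := by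
    rw [smul_toFun, norm_mul, Complex.norm_real, Real.norm_eq_abs,
      Real.mul_rpow (abs_nonneg _) (norm_nonneg _)]
  simp only [lpPow, h]
  exact integral_const_mul _ _

lemma gradSq_shift (a : ℝ) (φ : H1) : gradSq (φ.shift a) = gradSq φ :=
  integral_add_right_eq_self (fun x => ‖φ.dx x‖ ^ 2) a

lemma massSq_shift (a : ℝ) (φ : H1) : massSq (φ.shift a) = massSq φ :=
  integral_add_right_eq_self (fun x => ‖φ.toFun x‖ ^ 2) a

lemma lpPow_shift (p a : ℝ) (φ : H1) : lpPow p (φ.shift a) = lpPow p φ :=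
  integral_add_right_eq_self (fun x => ‖φ.toFun x‖ ^ (p + 1)) a

lemma Pfun_zero_shift (p a : ℝ) (φ : H1) : Pfun p 0 (φ.shift a) = Pfun p 0 φ := by
  simp only [Pfun, gradSq_shift, lpPow_shift, zero_div, zero_mul]

/-- The value of `S_{ω,μ}` on the constraint `P_μ = 0`, the `L^{p+1}` term eliminated. -/
noncomputable def reducedAction (p ω μ : ℝ) (φ : H1) : ℝ :=
  (p - 5) / (4 * (p - 1)) * gradSq φ + ω / 2 * massSq φ
    - μ * (p - 3) / (2 * (p - 1)) * ‖φ.toFun 0‖ ^ 2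

lemma Sfun_eq_reducedAction {p ω μ : ℝ} (hp : 1 < p) {φ : H1} (hP : Pfun p μ φ = 0) :
    Sfun p ω μ φ = reducedAction p ω μ φ := by
  have hp1 : p - 1 ≠ 0 := by linarith
  have hp2 : p + 1 ≠ 0 := by linarith
  have hL : lpPow p φ = (p + 1) / (p - 1) * (gradSq φ - μ * ‖φ.toFun 0‖ ^ 2) := by
    rw [Pfun] at hP
    field_simp at hP ⊢
    linear_combination -hP
  rw [Sfun, reducedAction, hL]
  field_simp
  ring

lemma reducedAction_smul (p ω μ l : ℝ) (φ : H1) :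
    reducedAction p ω μ (l • φ) = l ^ 2 * reducedAction p ω μ φ := by
  rw [reducedAction, reducedAction, gradSq_smul, massSq_smul, smul_toFun, norm_mul,
    Complex.norm_real, Real.norm_eq_abs, mul_pow, sq_abs]
  ring

lemma reducedAction_shift (p ω μ a : ℝ) (φ : H1) :
    reducedAction p ω μ (φ.shift a) =
      reducedAction p ω 0 φ - μ * (p - 3) / (2 * (p - 1)) * ‖φ.toFun a‖ ^ 2 := by
  rw [reducedAction, reducedAction, gradSq_shift, massSq_shift, shift_toFun, zero_add]
  ring

lemma reducedAction_zero_nonneg {p ω : ℝ} (hp : 5 ≤ p) (hω : 0 ≤ ω) (φ : H1) :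
    0 ≤ reducedAction p ω 0 φ := by
  have hG : 0 ≤ gradSq φ := integral_nonneg fun _ => by positivity
  have hM : 0 ≤ massSq φ := integral_nonneg fun _ => by positivity
  rw [reducedAction, zero_mul, zero_div, zero_mul, sub_zero]
  exact add_nonneg (mul_nonneg (div_nonneg (by linarith) (by linarith)) hG)
    (mul_nonneg (by linarith) hM)

lemma reducedAction_zero_le {p ω μ : ℝ} (hp : 3 ≤ p) (hμ : μ ≤ 0) (φ : H1) :
    reducedAction p ω 0 φ ≤ reducedAction p ω μ φ := by
  have hcoef : μ * (p - 3) / (2 * (p - 1)) ≤ 0 :=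
    div_nonpos_of_nonpos_of_nonneg (mul_nonpos_of_nonpos_of_nonneg hμ (by linarith)) (by linarith)
  have hB := mul_nonpos_of_nonpos_of_nonneg hcoef (sq_nonneg ‖φ.toFun 0‖)
  simp only [reducedAction, zero_mul, zero_div]
  linarith

lemma Sfun_nonneg_of_Pfun_eq_zero {p ω μ : ℝ} (hp : 5 ≤ p) (hω : 0 ≤ ω) (hμ : μ ≤ 0) {φ : H1}
    (hP : Pfun p μ φ = 0) : 0 ≤ Sfun p ω μ φ := by
  rw [Sfun_eq_reducedAction (by linarith) hP]
  exact (reducedAction_zero_nonneg hp hω φ).trans (reducedAction_zero_le (by linarith) hμ φ)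

lemma Pfun_rpow_smul_eq_zero {p μ ν : ℝ} (hp : 1 < p) {φ : H1} (hP : Pfun p μ φ = 0)
    (hμ : 0 < gradSq φ - μ * ‖φ.toFun 0‖ ^ 2) (hν : 0 ≤ gradSq φ - ν * ‖φ.toFun 0‖ ^ 2) :
    Pfun p ν ((((gradSq φ - ν * ‖φ.toFun 0‖ ^ 2) / (gradSq φ - μ * ‖φ.toFun 0‖ ^ 2))
      ^ (1 / (p - 1))) • φ) = 0 := by
  set r := (gradSq φ - ν * ‖φ.toFun 0‖ ^ 2) / (gradSq φ - μ * ‖φ.toFun 0‖ ^ 2)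
  have hr0 : 0 ≤ r := div_nonneg hν hμ.le
  have hl : 0 ≤ r ^ (1 / (p - 1)) := Real.rpow_nonneg hr0 _
  rw [Pfun] at hP
  rw [Pfun, gradSq_smul, lpPow_smul, smul_toFun, norm_mul, Complex.norm_real, Real.norm_eq_abs,
    abs_of_nonneg hl, mul_pow, rpow_one_div_sub_one_rpow_add_one hr0 hp]
  have hrμ : r * (gradSq φ - μ * ‖φ.toFun 0‖ ^ 2) = gradSq φ - ν * ‖φ.toFun 0‖ ^ 2 :=
    div_mul_cancel₀ _ hμ.ne'
  linear_combination (r ^ (1 / (p - 1))) ^ 2 * (r * hP - hrμ / 2)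

lemma exists_Pfun_zero_eq_zero_Sfun_zero_le {p ω γ : ℝ} (hp : 5 ≤ p) (hω : 0 ≤ ω) (hγ : γ ≤ 0)
    {φ : H1} (hφ : φ.toFun ≠ 0) (hP : Pfun p γ φ = 0) :
    ∃ ψ : H1, ψ.toFun ≠ 0 ∧ Pfun p 0 ψ = 0 ∧ Sfun p ω 0 ψ ≤ Sfun p ω γ φ := by
  have hp1 : 1 < p := by linarith
  have hG := gradSq_pos hφ
  have hγB : 0 ≤ -γ * ‖φ.toFun 0‖ ^ 2 := mul_nonneg (neg_nonneg.2 hγ) (sq_nonneg _)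
  set r := (gradSq φ - 0 * ‖φ.toFun 0‖ ^ 2) / (gradSq φ - γ * ‖φ.toFun 0‖ ^ 2)
  have hr0 : 0 < r := div_pos (by linarith) (by linarith)
  have hr1 : r ≤ 1 := div_le_one_of_le₀ (by linarith) (by linarith)
  have hl0 : 0 < r ^ (1 / (p - 1)) := Real.rpow_pos_of_pos hr0 _
  have hl1 : r ^ (1 / (p - 1)) ≤ 1 := Real.rpow_le_one hr0.le hr1 (by positivity)
  have hψP := Pfun_rpow_smul_eq_zero (ν := 0) hp1 hP (by linarith) (by linarith)
  refine ⟨_, smul_toFun_ne_zero hl0.ne' hφ, hψP, ?_⟩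
  rw [Sfun_eq_reducedAction hp1 hψP, reducedAction_smul, Sfun_eq_reducedAction hp1 hP]
  calc (r ^ (1 / (p - 1))) ^ 2 * reducedAction p ω 0 φ ≤ reducedAction p ω 0 φ :=
        mul_le_of_le_one_left (reducedAction_zero_nonneg hp hω φ) (pow_le_one₀ hl0.le hl1)
    _ ≤ reducedAction p ω γ φ := reducedAction_zero_le (by linarith) hγ φ

lemma exists_Pfun_eq_zero_Sfun_le_add {p ω γ : ℝ} (hp : 1 < p) (hγ : γ ≤ 0) {φ : H1}
    (hφ : φ.toFun ≠ 0) (hP : Pfun p 0 φ = 0) {ε : ℝ} (hε : 0 < ε) :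
    ∃ ψ : H1, ψ.toFun ≠ 0 ∧ Pfun p γ ψ = 0 ∧ Sfun p ω γ ψ ≤ Sfun p ω 0 φ + ε := by
  have hG := gradSq_pos hφ
  -- the action obtained from the translate with `|φ(a)|² = b`, scaled onto `P_γ = 0`
  set f : ℝ → ℝ := fun b => (((gradSq φ - γ * b) / gradSq φ) ^ (1 / (p - 1))) ^ 2 *
    (reducedAction p ω 0 φ - γ * (p - 3) / (2 * (p - 1)) * b)
  have hf : Continuous f :=
    (((Real.continuous_rpow_const (one_div_nonneg.2 (by linarith))).comp
      (by fun_prop : Continuous fun b => (gradSq φ - γ * b) / gradSq φ)).pow 2).mul (by fun_prop)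
  have hf0 : f 0 = Sfun p ω 0 φ := by
    simp [f, div_self hG.ne', Sfun_eq_reducedAction hp hP]
  obtain ⟨δ, hδ, hfδ⟩ := Metric.eventually_nhds_iff.1
    (hf.continuousAt.eventually (gt_mem_nhds (lt_add_of_pos_right (f 0) hε)))
  obtain ⟨a, ha⟩ := exists_norm_sq_lt φ hδ
  have hPa : Pfun p 0 (φ.shift a) = 0 := (Pfun_zero_shift p a φ).trans hP
  have hγB : 0 ≤ -γ * ‖φ.toFun a‖ ^ 2 := mul_nonneg (neg_nonneg.2 hγ) (sq_nonneg _)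
  have hψP := Pfun_rpow_smul_eq_zero (ν := γ) hp hPa
    (by simpa [gradSq_shift] using hG) (by rw [gradSq_shift, shift_toFun, zero_add]; linarith)
  refine ⟨_, smul_toFun_ne_zero (Real.rpow_pos_of_pos ?_ _).ne' (shift_toFun_ne_zero a hφ), hψP, ?_⟩
  · rw [gradSq_shift, shift_toFun, zero_add]
    exact div_pos (by linarith) (by simpa using hG)
  rw [← hf0, Sfun_eq_reducedAction hp hψP, reducedAction_smul, reducedAction_shift, gradSq_shift,
    shift_toFun, zero_add, zero_mul, sub_zero]
  refine (hfδ (y := ‖φ.toFun a‖ ^ 2) ?_).le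
  rw [Real.dist_eq, sub_zero, abs_of_nonneg (sq_nonneg _)]
  exact ha

/-- For `p > 5`, `γ < 0`, `ω > 0`, one has `n_ω = l_ω`. -/
theorem nOmega_eq_lOmega (p γ ω : ℝ) (hp : 5 < p) (hγ : γ < 0) (hω : 0 < ω) :
    nOmega p γ ω = lOmega p ω := by
  have hp1 : 1 < p := by linarith
  refine csInf_eq_csInf_of_forall_exists_le_add ?_ ?_ ?_ ?_
  · refine ⟨0, ?_⟩
    rintro _ ⟨φ, -, hP, rfl⟩
    exact Sfun_nonneg_of_Pfun_eq_zero hp.le hω.le hγ.le hP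
  · refine ⟨0, ?_⟩
    rintro _ ⟨φ, -, hP, rfl⟩
    exact Sfun_nonneg_of_Pfun_eq_zero hp.le hω.le le_rfl hP
  · rintro _ ⟨φ, hφ, hP, rfl⟩ ε hε
    obtain ⟨ψ, hψ, hψP, hψS⟩ := exists_Pfun_zero_eq_zero_Sfun_zero_le hp.le hω.le hγ.le hφ hP
    exact ⟨_, ⟨ψ, hψ, hψP, rfl⟩, hψS.trans (le_add_of_nonneg_right hε.le)⟩
  · rintro _ ⟨φ, hφ, hP, rfl⟩ ε hε
    obtain ⟨ψ, hψ, hψP, hψS⟩ := exists_Pfun_eq_zero_Sfun_le_add hp1 hγ.le hφ hP hε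
    exact ⟨_, ⟨ψ, hψ, hψP, rfl⟩, hψS⟩
end

section
/- Let p > 5, γ ≤ 0, ω > 0, and let (α,β) satisfy α > 0, 2α−β ≥ 0 and 2α+β ≥ 0; set μ̄ = max{2α−β, 2α+β}. Then for every φ ∈ H¹(ℝ): μ̄·J^{α,β}_{ω,γ}(φ) ≥ |β|·min{ (1/2)‖∂ₓφ‖²_{L²}, ω‖φ‖²_{L²} } − (γ|β|/2)|φ(0)|² + ((p−5)α/(p+1))‖φ‖^{p+1}_{L^{p+1}}. In particular J^{α,β}_{ω,γ}(φ) ≥ 0 for every φ ∈ H¹(ℝ). -/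
open MeasureTheory Real Filter Topology

/-!
Writing `μ̄ J = μ̄ S − K`, the choice of `μ̄` makes one of the quadratic terms cancel: for `β ≥ 0`
we have `μ̄ = 2α + β` and the mass terms cancel, leaving `(β/2)‖∂ₓφ‖²`; for `β ≤ 0` we have
`μ̄ = 2α − β` and the gradient terms cancel, leaving `−βω‖φ‖²`. In both cases the remaining
`L^{p+1}` coefficient is at least `(p−5)α/(p+1)`, using `2α + β ≥ 0` when `β ≤ 0`.
-/

lemma gradSq_nonneg (φ : H1) : 0 ≤ gradSq φ :=
  integral_nonneg fun _ => by positivity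

lemma massSq_nonneg (φ : H1) : 0 ≤ massSq φ :=
  integral_nonneg fun _ => by positivity

lemma lpPow_nonneg (p : ℝ) (φ : H1) : 0 ≤ lpPow p φ :=
  integral_nonneg fun _ => Real.rpow_nonneg (norm_nonneg _) _

section Identities

variable {p ω γ α β : ℝ}

lemma max_mul_Jfun_of_nonneg (hp : p + 1 ≠ 0) (hα : 0 < α) (hβ : 0 ≤ β) (φ : H1) :
    max (2*α-β) (2*α+β) * Jfun p ω γ α β φ
      = (β/2) * gradSq φ - (γ*β/2) * ‖φ.toFun 0‖ ^ 2 + ((p-1)*α/(p+1)) * lpPow p φ := by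
  have hμ : 2*α+β ≠ 0 := by linarith
  rw [Jfun, Sfun, Kfun, max_eq_right (by linarith)]
  field_simp
  ring

lemma max_mul_Jfun_of_nonpos (hp : p + 1 ≠ 0) (hα : 0 < α) (hβ : β ≤ 0) (φ : H1) :
    max (2*α-β) (2*α+β) * Jfun p ω γ α β φ
      = (-β) * (ω * massSq φ) - (γ*(-β)/2) * ‖φ.toFun 0‖ ^ 2
        + (((p-1)*α+2*β)/(p+1)) * lpPow p φ := by
  have hμ : 2*α-β ≠ 0 := by linarith
  rw [Jfun, Sfun, Kfun, max_eq_left (by linarith)]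
  field_simp
  ring

end Identities

lemma max_mul_Jfun_lower_bound {p ω γ α β : ℝ} (hp : -1 < p) (hα : 0 < α) (hβ : 0 ≤ 2*α + β)
    (φ : H1) :
    |β| * min ((1/2) * gradSq φ) (ω * massSq φ) - (γ * |β| / 2) * ‖φ.toFun 0‖ ^ 2
      + ((p-5)*α/(p+1)) * lpPow p φ ≤ max (2*α-β) (2*α+β) * Jfun p ω γ α β φ := by
  have hp1 : 0 < p + 1 := by linarith
  have hL := lpPow_nonneg p φ
  rcases le_total 0 β with hβ₀ | hβ₀
  · rw [max_mul_Jfun_of_nonneg hp1.ne' hα hβ₀, abs_of_nonneg hβ₀]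
    have hmin := mul_le_mul_of_nonneg_left (min_le_left ((1/2) * gradSq φ) (ω * massSq φ)) hβ₀
    have hcoef : (p-5)*α/(p+1) * lpPow p φ ≤ (p-1)*α/(p+1) * lpPow p φ := by
      gcongr
      linarith
    linarith
  · rw [max_mul_Jfun_of_nonpos hp1.ne' hα hβ₀, abs_of_nonpos hβ₀]
    have hmin := mul_le_mul_of_nonneg_left (min_le_right ((1/2) * gradSq φ) (ω * massSq φ))
      (neg_nonneg.mpr hβ₀)
    have hcoef : (p-5)*α/(p+1) * lpPow p φ ≤ ((p-1)*α+2*β)/(p+1) * lpPow p φ := by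
      gcongr
      linarith
    linarith

lemma Jfun_nonneg {p ω γ α β : ℝ} (hp : 5 < p) (hγ : γ ≤ 0) (hω : 0 < ω) (hα : 0 < α)
    (hβ : 0 ≤ 2*α + β) (φ : H1) : 0 ≤ Jfun p ω γ α β φ := by
  have hμ : 0 < max (2*α-β) (2*α+β) := by
    rcases le_total 0 β with hβ₀ | hβ₀
    · exact lt_max_of_lt_right (by linarith)
    · exact lt_max_of_lt_left (by linarith)
  have hmin : 0 ≤ |β| * min ((1/2) * gradSq φ) (ω * massSq φ) :=
    mul_nonneg (abs_nonneg β)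
      (le_min (mul_nonneg (by norm_num) (gradSq_nonneg φ)) (mul_nonneg hω.le (massSq_nonneg φ)))
  have hdelta : 0 ≤ -(γ * |β| / 2) * ‖φ.toFun 0‖ ^ 2 :=
    mul_nonneg (by nlinarith [abs_nonneg β]) (sq_nonneg _)
  have hL : 0 ≤ (p-5)*α/(p+1) * lpPow p φ :=
    mul_nonneg (div_nonneg (mul_nonneg (by linarith) hα.le) (by linarith)) (lpPow_nonneg p φ)
  have hbound := max_mul_Jfun_lower_bound (p := p) (ω := ω) (γ := γ) (by linarith) hα hβ φ
  exact nonneg_of_mul_nonneg_right (by linarith) hμ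

theorem J_lower_bound_general (p γ ω α β : ℝ) (hp : 5 < p) (hγ : γ ≤ 0) (hω : 0 < ω)
    (hα : 0 < α) (hβ2 : 0 ≤ 2*α + β) :
    (∀ φ : H1,
      |β| * min ((1/2) * gradSq φ) (ω * massSq φ) - (γ * |β| / 2) * ‖φ.toFun 0‖ ^ 2
        + ((p-5)*α/(p+1)) * lpPow p φ ≤ max (2*α-β) (2*α+β) * Jfun p ω γ α β φ) ∧
    (∀ φ : H1, 0 ≤ Jfun p ω γ α β φ) := by
  exact ⟨fun _ => max_mul_Jfun_lower_bound (by linarith) hα hβ2 _, Jfun_nonneg hp hγ hω hα hβ2⟩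

/-- the lower bound `μ̄·J^{α,β}_{ω,γ}(φ) ≥ |β|·min((1/2)‖∂ₓφ‖²_{L²}, ω‖φ‖²_{L²})
− (γ|β|/2)|φ(0)|² + ((p−5)α/(p+1))‖φ‖^{p+1}_{L^{p+1}}`, and in particular `J^{α,β}_{ω,γ} ≥ 0`. -/
theorem J_lower_bound (p γ ω α β : ℝ) (hp : 5 < p) (hγ : γ ≤ 0) (hω : 0 < ω)
    (hα : 0 < α) (hβ1 : 0 ≤ 2*α - β) (hβ2 : 0 ≤ 2*α + β) :
    (∀ φ : H1,
      |β| * min ((1/2) * gradSq φ) (ω * massSq φ) - (γ * |β| / 2) * ‖φ.toFun 0‖ ^ 2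
        + ((p-5)*α/(p+1)) * lpPow p φ ≤ max (2*α-β) (2*α+β) * Jfun p ω γ α β φ) ∧
    (∀ φ : H1, 0 ≤ Jfun p ω γ α β φ) :=
  J_lower_bound_general p γ ω α β hp hγ hω hα hβ2
end
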